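/- arXiv:2408.11467 — 3 statements merged into one kernel-verified Lean document; each statement's English description precedes it below -/
import Mathlib

section
/- If the entropy of a uniform L-symbol secret Δ satisfies: Δ is recoverable from any R-|D| of the shares (Q_n)_{n∈[N]\D}, and Δ is independent of any X of the shares, then the total entropy of all shares satisfies Σ_{n∈[N]\D} H(Q_n) ≥ L·(N-|D|)/(R-X-|D|). (Threshold secret sharing communication lower bound via averaging over recovery sets.) -/
open scoped BigOperators

/-- `p` is a probability mass function on the finite sample space `Ω`. -/
def IsPMF {Ω : Type} [Fintype Ω] (p : Ω → ℝ) : Prop :=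
  (∀ ω, 0 ≤ p ω) ∧ ∑ ω : Ω, p ω = 1

open Classical in
/-- Probability of the event `E` under the pmf `p`. -/
noncomputable def probEvent {Ω : Type} [Fintype Ω] (p : Ω → ℝ) (E : Ω → Prop) : ℝ :=
  ∑ ω : Ω, if E ω then p ω else 0

/-- Shannon entropy (base `b`) of the random variable `X` under the pmf `p`. -/
noncomputable def entH {Ω α : Type} [Fintype Ω] [Fintype α]
    (b : ℝ) (p : Ω → ℝ) (X : Ω → α) : ℝ :=
  -∑ x : α, probEvent p (fun ω => X ω = x) * Real.logb b (probEvent p (fun ω => X ω = x))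

/-- Conditional entropy `H(X | Y) = H(X,Y) - H(Y)`. -/
noncomputable def condH {Ω α β : Type} [Fintype Ω] [Fintype α] [Fintype β]
    (b : ℝ) (p : Ω → ℝ) (X : Ω → α) (Y : Ω → β) : ℝ :=
  entH b p (fun ω => (X ω, Y ω)) - entH b p Y

/-- Mutual information `I(X;Y) = H(X) + H(Y) - H(X,Y)`. -/
noncomputable def mutI {Ω α β : Type} [Fintype Ω] [Fintype α] [Fintype β]
    (b : ℝ) (p : Ω → ℝ) (X : Ω → α) (Y : Ω → β) : ℝ :=
  entH b p X + entH b p Y - entH b p (fun ω => (X ω, Y ω))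

/-- Conditional mutual information `I(X;Y | Z) = H(X|Z) - H(X|Y,Z)`. -/
noncomputable def condMI {Ω α β δ : Type} [Fintype Ω] [Fintype α] [Fintype β] [Fintype δ]
    (b : ℝ) (p : Ω → ℝ) (X : Ω → α) (Y : Ω → β) (Z : Ω → δ) : ℝ :=
  condH b p X Z - condH b p X (fun ω => (Y ω, Z ω))

/-- `X` and `Y` are independent random variables under `p`. -/
def IndepRV {Ω α β : Type} [Fintype Ω] [Fintype α] [Fintype β]
    (p : Ω → ℝ) (X : Ω → α) (Y : Ω → β) : Prop :=
  ∀ x y, probEvent p (fun ω => X ω = x ∧ Y ω = y)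
    = probEvent p (fun ω => X ω = x) * probEvent p (fun ω => Y ω = y)

/-- `X` is uniformly distributed under `p`. -/
def IsUniform {Ω α : Type} [Fintype Ω] [Fintype α] (p : Ω → ℝ) (X : Ω → α) : Prop :=
  ∀ x, probEvent p (fun ω => X ω = x) = ((Fintype.card α : ℝ))⁻¹

/-! Pad any `k = R - X - |D|` available shares `S` with `X` further shares `X'` to a recovering
set. Secrecy, monotonicity of entropy under functions, recoverability and subadditivity give
`H(Δ) = H(Δ, Q_X') - H(Q_X') ≤ H(Δ, Q_{S∪X'}) - H(Q_X') = H(Q_{S∪X'}) - H(Q_X') ≤ H(Q_S)`,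
and `H(Q_S) ≤ ∑_{n∈S} H(Q_n)`. Summing over all `k`-subsets of the `N - |D|` available shares
counts each share in a fraction `k / (N - |D|)` of them. -/

open Finset Real

theorem mul_log_sub_mul_log_le {r q : ℝ} (hr : 0 ≤ r) (hq : 0 ≤ q) (hrq : 0 < r → 0 < q) :
    r * log q - r * log r ≤ q - r := by
  rcases hr.eq_or_lt with rfl | hr
  · simpa using hq
  have hq := hrq hr
  have hlog := log_le_sub_one_of_pos (div_pos hq hr)
  rw [log_div hq.ne' hr.ne'] at hlog
  calc r * log q - r * log r = r * (log q - log r) := by ring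
    _ ≤ r * (q / r - 1) := by gcongr
    _ = q - r := by field_simp

/-- Gibbs' inequality. -/
theorem sum_mul_log_le_sum_mul_log {ι : Type*} (s : Finset ι) {r q : ι → ℝ}
    (hr : ∀ i ∈ s, 0 ≤ r i) (hq : ∀ i ∈ s, 0 ≤ q i) (hrq : ∀ i ∈ s, 0 < r i → 0 < q i)
    (hsum : ∑ i ∈ s, q i ≤ ∑ i ∈ s, r i) :
    ∑ i ∈ s, r i * log (q i) ≤ ∑ i ∈ s, r i * log (r i) := by
  have hterm := sum_le_sum fun i hi => mul_log_sub_mul_log_le (hr i hi) (hq i hi) (hrq i hi)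
  rw [sum_sub_distrib, sum_sub_distrib] at hterm
  linarith

section Entropy

variable {Ω α β γ : Type} [Fintype Ω] [Fintype α] [Fintype β] [Fintype γ] {b : ℝ} {p : Ω → ℝ}

theorem probEvent_nonneg (hp : IsPMF p) (E : Ω → Prop) : 0 ≤ probEvent p E :=
  sum_nonneg fun ω _ => by split_ifs <;> simp [hp.1 ω]

theorem probEvent_mono (hp : IsPMF p) {E F : Ω → Prop} (h : ∀ ω, E ω → F ω) :
    probEvent p E ≤ probEvent p F :=
  sum_le_sum fun ω _ => by
    by_cases hE : E ω
    · simp [hE, h ω hE]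
    · split_ifs <;> simp [hp.1 ω]

theorem sum_probEvent_mul (X : Ω → α) (g : α → ℝ) :
    ∑ x, probEvent p (fun ω => X ω = x) * g x = ∑ ω, p ω * g (X ω) := by
  classical
  simp only [probEvent, sum_mul, ite_mul, zero_mul]
  rw [sum_comm]
  simp

theorem sum_probEvent_comp_mul (f : α → γ) (X : Ω → α) (g : γ → ℝ) :
    ∑ x, probEvent p (fun ω => X ω = x) * g (f x)
      = ∑ y, probEvent p (fun ω => f (X ω) = y) * g y := by
  rw [sum_probEvent_mul, sum_probEvent_mul]

theorem sum_probEvent (hp : IsPMF p) (X : Ω → α) : ∑ x, probEvent p (fun ω => X ω = x) = 1 := by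
  simpa [hp.2] using sum_probEvent_mul (p := p) X (fun _ => 1)

theorem entH_eq_neg_sum_mul_log_div (X : Ω → α) :
    entH b p X = -(∑ x, probEvent p (fun ω => X ω = x) * log (probEvent p (fun ω => X ω = x)))
      / log b := by
  simp only [entH, logb, ← mul_div_assoc, ← sum_div, neg_div]

theorem entH_eq_zero_of_subsingleton [Subsingleton α] (hp : IsPMF p) (X : Ω → α) :
    entH b p X = 0 := by
  have hsure : ∀ x, probEvent p (fun ω => X ω = x) = 1 := fun x => by
    simp [probEvent, Subsingleton.elim _ x, hp.2]
  simp [entH, hsure]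

theorem entH_comp_le (hb : 1 < b) (hp : IsPMF p) (f : α → γ) (X : Ω → α) :
    entH b p (fun ω => f (X ω)) ≤ entH b p X := by
  rw [entH_eq_neg_sum_mul_log_div, entH_eq_neg_sum_mul_log_div,
    div_le_div_iff_of_pos_right (log_pos hb), neg_le_neg_iff,
    ← sum_probEvent_comp_mul f X (fun y => log (probEvent p (fun ω => f (X ω) = y)))]
  refine sum_le_sum fun x _ => ?_
  rcases (probEvent_nonneg hp (fun ω => X ω = x)).eq_or_lt with h0 | hpos
  · simp [← h0]
  · exact mul_le_mul_of_nonneg_left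
      (log_le_log hpos (probEvent_mono hp fun ω h => by rw [h])) hpos.le

theorem entH_pair_le_add (hb : 1 < b) (hp : IsPMF p) (X : Ω → α) (Y : Ω → β) :
    entH b p (fun ω => (X ω, Y ω)) ≤ entH b p X + entH b p Y := by
  set r : α × β → ℝ := fun c => probEvent p (fun ω => (X ω, Y ω) = c) with hr
  set PX : α → ℝ := fun x => probEvent p (fun ω => X ω = x)
  set PY : β → ℝ := fun y => probEvent p (fun ω => Y ω = y)
  have hPX : ∀ c, r c ≤ PX c.1 := fun c => probEvent_mono hp fun ω h => congrArg Prod.fst h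
  have hPY : ∀ c, r c ≤ PY c.2 := fun c => probEvent_mono hp fun ω h => congrArg Prod.snd h
  have hX : ∑ c, r c * log (PX c.1) = ∑ x, PX x * log (PX x) :=
    sum_probEvent_comp_mul Prod.fst (fun ω => (X ω, Y ω)) (fun x => log (PX x))
  have hY : ∑ c, r c * log (PY c.2) = ∑ y, PY y * log (PY y) :=
    sum_probEvent_comp_mul Prod.snd (fun ω => (X ω, Y ω)) (fun y => log (PY y))
  have hsplit : ∑ c, r c * log (PX c.1 * PY c.2)
      = ∑ c, r c * log (PX c.1) + ∑ c, r c * log (PY c.2) := by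
    rw [← sum_add_distrib]
    refine sum_congr rfl fun c _ => ?_
    rcases (probEvent_nonneg hp (fun ω => (X ω, Y ω) = c)).eq_or_lt with h0 | hpos
    · simp [hr, ← h0]
    · rw [log_mul (hpos.trans_le (hPX c)).ne' (hpos.trans_le (hPY c)).ne', mul_add]
  have hgibbs := sum_mul_log_le_sum_mul_log univ (r := r) (q := fun c => PX c.1 * PY c.2)
    (fun c _ => probEvent_nonneg hp _)
    (fun c _ => mul_nonneg (probEvent_nonneg hp _) (probEvent_nonneg hp _))
    (fun c _ hc => mul_pos (hc.trans_le (hPX c)) (hc.trans_le (hPY c)))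
    (by rw [Fintype.sum_prod_type, ← sum_mul_sum, sum_probEvent hp X, sum_probEvent hp Y,
      sum_probEvent hp (fun ω => (X ω, Y ω)), one_mul])
  rw [entH_eq_neg_sum_mul_log_div, entH_eq_neg_sum_mul_log_div, entH_eq_neg_sum_mul_log_div,
    ← add_div, div_le_div_iff_of_pos_right (log_pos hb)]
  linarith

theorem entH_le_sub_of_condH_eq_zero_of_mutI_eq_zero (hb : 1 < b) (hp : IsPMF p)
    (A : Ω → α) (Z : Ω → γ) (g : γ → β) (hrec : condH b p A Z = 0)
    (hsec : mutI b p A (fun ω => g (Z ω)) = 0) :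
    entH b p A ≤ entH b p Z - entH b p (fun ω => g (Z ω)) := by
  have hmono : entH b p (fun ω => (A ω, g (Z ω))) ≤ entH b p (fun ω => (A ω, Z ω)) :=
    entH_comp_le hb hp (Prod.map id g) (fun ω => (A ω, Z ω))
  unfold condH at hrec
  unfold mutI at hsec
  linarith

end Entropy

section Shares

variable {Ω ι σ τ : Type} [Fintype Ω] [DecidableEq ι] [Fintype σ] [Fintype τ]
  {b : ℝ} {p : Ω → ℝ}

theorem entH_restrict_union_le (hb : 1 < b) (hp : IsPMF p) (Q : ι → Ω → τ) (A B : Finset ι) :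
    entH b p (fun ω => (A ∪ B).restrict (Q · ω))
      ≤ entH b p (fun ω => A.restrict (Q · ω)) + entH b p (fun ω => B.restrict (Q · ω)) := by
  let glue : (A → τ) × (B → τ) → (A ∪ B : Finset ι) → τ := fun st n =>
    if h : n.1 ∈ A then st.1 ⟨n, h⟩ else st.2 ⟨n, (mem_union.1 n.2).resolve_left h⟩
  have hglue : (fun ω => (A ∪ B).restrict (Q · ω))
      = fun ω => glue (A.restrict (Q · ω), B.restrict (Q · ω)) := by
    funext ω n
    simp only [glue]
    split_ifs <;> rfl
  rw [hglue]
  exact (entH_comp_le hb hp glue _).trans (entH_pair_le_add hb hp _ _)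

theorem entH_restrict_le_sum (hb : 1 < b) (hp : IsPMF p) (Q : ι → Ω → τ) (S : Finset ι) :
    entH b p (fun ω => S.restrict (Q · ω)) ≤ ∑ n ∈ S, entH b p (Q n) := by
  induction S using Finset.induction_on with
  | empty => simp [entH_eq_zero_of_subsingleton hp]
  | insert a S ha ih =>
    have hsingle : entH b p (fun ω => ({a} : Finset ι).restrict (Q · ω)) ≤ entH b p (Q a) := by
      have hconst : (fun ω => ({a} : Finset ι).restrict (Q · ω))
          = fun ω => (fun (t : τ) (_ : ({a} : Finset ι)) => t) (Q a ω) := by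
        funext ω ⟨n, hn⟩
        obtain rfl := mem_singleton.1 hn
        rfl
      rw [hconst]
      exact entH_comp_le hb hp (fun (t : τ) (_ : ({a} : Finset ι)) => t) (Q a)
    rw [sum_insert ha, insert_eq]
    linarith [entH_restrict_union_le hb hp Q {a} S]

theorem entH_le_sum_entH_of_recover_of_secret (hb : 1 < b) (hp : IsPMF p)
    (Δ : Ω → σ) (Q : ι → Ω → τ) {S X : Finset ι}
    (hrec : condH b p Δ (fun ω => (S ∪ X).restrict (Q · ω)) = 0)
    (hsec : mutI b p Δ (fun ω => X.restrict (Q · ω)) = 0) :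
    entH b p Δ ≤ ∑ n ∈ S, entH b p (Q n) := by
  have hgap : entH b p Δ ≤ entH b p (fun ω => (S ∪ X).restrict (Q · ω))
      - entH b p (fun ω => X.restrict (Q · ω)) :=
    entH_le_sub_of_condH_eq_zero_of_mutI_eq_zero hb hp Δ _
      (fun (t : (S ∪ X : Finset ι) → τ) (n : X) => t ⟨n, mem_union_right S n.2⟩) hrec hsec
  have hunion := entH_restrict_union_le hb hp Q S X
  have hsum := entH_restrict_le_sum hb hp Q S
  linarith

end Shares

section Averaging

variable {ι : Type} [DecidableEq ι]

theorem sum_powersetCard_sum (T : Finset ι) {k : ℕ} (hk : 0 < k) (f : ι → ℝ) :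
    ∑ S ∈ T.powersetCard k, ∑ n ∈ S, f n = (T.card - 1).choose (k - 1) * ∑ n ∈ T, f n := by
  rw [sum_comm' (t' := T) (s' := fun n => (T.powersetCard k).filter ({n} ⊆ ·))]
  · rw [mul_sum]
    refine sum_congr rfl fun n hn => ?_
    rw [sum_const, card_filter_powersetCard_subset _ _ _ (singleton_subset_iff.2 hn)
      (by rw [card_singleton]; omega), card_singleton, nsmul_eq_mul]
  · intro S n
    simp only [mem_powersetCard, mem_filter, singleton_subset_iff]
    constructor
    · rintro ⟨⟨hST, hS⟩, hn⟩
      exact ⟨⟨⟨hST, hS⟩, hn⟩, hST hn⟩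
    · rintro ⟨h, -⟩
      exact h

theorem mul_card_le_sum_mul_of_le_sum_powersetCard (T : Finset ι) {k : ℕ} (hk : 0 < k)
    (hkT : k ≤ T.card) (f : ι → ℝ) {c : ℝ}
    (h : ∀ S ∈ T.powersetCard k, c ≤ ∑ n ∈ S, f n) :
    c * T.card ≤ (∑ n ∈ T, f n) * k := by
  have hle := card_nsmul_le_sum _ _ _ h
  rw [card_powersetCard, nsmul_eq_mul, sum_powersetCard_sum T hk] at hle
  have hchoose := Nat.add_one_mul_choose_eq (T.card - 1) (k - 1)
  rw [Nat.sub_add_cancel (hk.trans_le hkT), Nat.sub_add_cancel hk] at hchoose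
  have hpos : (0 : ℝ) < (T.card - 1).choose (k - 1) := by
    exact_mod_cast Nat.choose_pos (by omega)
  have hchoose' : (T.card : ℝ) * (T.card - 1).choose (k - 1) = T.card.choose k * k := by
    exact_mod_cast hchoose
  refine le_of_mul_le_mul_right ?_ hpos
  calc c * T.card * (T.card - 1).choose (k - 1) = T.card.choose k * c * k := by
        rw [mul_assoc, hchoose']; ring
    _ ≤ (T.card - 1).choose (k - 1) * (∑ n ∈ T, f n) * k := by gcongr
    _ = (∑ n ∈ T, f n) * k * (T.card - 1).choose (k - 1) := by ring

end Averaging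

/-- Threshold secret sharing total-communication lower bound: if the secret `Δ`
with `H(Δ) = L` is recoverable from any `R - |D|` of the shares `(Q_n)_{n∈[N]∖D}`
and independent of any `X` of those shares (with `X < R - |D| ≤ N - |D|`), then
`∑_{n∈[N]∖D} H(Q_n) ≥ L·(N-|D|)/(R-X-|D|)`. -/
theorem threshold_secret_sharing_total_bound
    {Ω σ τ : Type} [Fintype Ω] [Fintype σ] [Fintype τ]
    (b : ℝ) (hb : 1 < b) (p : Ω → ℝ) (hp : IsPMF p)
    {N : ℕ} (D : Finset (Fin N)) (R X : ℕ) (L : ℝ)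
    (Δ : Ω → σ) (Q : Fin N → Ω → τ)
    (hL : entH b p Δ = L)
    (hXR : X + D.card < R) (hRN : R ≤ N)
    (hrec : ∀ R' : Finset (Fin N), R' ⊆ Finset.univ \ D → R'.card = R - D.card →
      condH b p Δ (fun ω => (fun n : R' => Q n ω)) = 0)
    (hsec : ∀ X' : Finset (Fin N), X' ⊆ Finset.univ \ D → X'.card = X →
      mutI b p Δ (fun ω => (fun n : X' => Q n ω)) = 0) :
    L * ((N : ℝ) - D.card) / ((R : ℝ) - X - D.card)
      ≤ ∑ n ∈ Finset.univ \ D, entH b p (Q n) := by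
  set T := univ \ D
  have hT : T.card = N - D.card := by simp [T, card_sdiff]
  have hsubset : ∀ S ∈ T.powersetCard (R - X - D.card), L ≤ ∑ n ∈ S, entH b p (Q n) := by
    intro S hS
    obtain ⟨hST, hScard⟩ := mem_powersetCard.1 hS
    obtain ⟨X', hX'S, hX'card⟩ :=
      exists_subset_card_eq (s := T \ S) (n := X) (by rw [card_sdiff_of_subset hST]; omega)
    have hX'T : X' ⊆ T := hX'S.trans sdiff_subset
    have hdisj : Disjoint S X' := disjoint_of_subset_right hX'S disjoint_sdiff
    rw [← hL]
    exact entH_le_sum_entH_of_recover_of_secret hb hp Δ Q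
      (hrec _ (union_subset hST hX'T) (by rw [card_union_of_disjoint hdisj]; omega))
      (hsec X' hX'T hX'card)
  have hN : (N : ℝ) - D.card = T.card := by rw [hT, Nat.cast_sub (by omega)]
  have hR : (R : ℝ) - X - D.card = (R - X - D.card : ℕ) := by
    rw [Nat.sub_sub, Nat.cast_sub (by omega)]
    push_cast
    ring
  rw [hN, hR, div_le_iff₀ (by exact_mod_cast (by omega : 0 < R - X - D.card))]
  exact mul_card_le_sum_mul_of_le_sum_powersetCard T (by omega) (by omega) _ hsubset
end

section
/- If I(Δ; Q) = 0, H(S' | S, Q) = 0, and I(Δ, Q; S) = 0, then I(Δ; S' | S) = 0. (Lemma 2: securely coded updates preserve conditional independence of the increment from updated storage.) -/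
open scoped BigOperators

/-!
All the quantities involved are linear combinations of joint entropies, so the lemma is a linear
consequence of the nonnegativity of (conditional) mutual information and conditional entropy,
together with the invariance of entropy under injective relabelling of values:
`I(Δ;S'|S) ≤ I(Δ;S',Q|S) = I(Δ;Q|S) + I(Δ;S'|S,Q)`, where `I(Δ;S'|S,Q) ≤ H(S'|S,Q) = 0`, and
`I(Δ;Q|S) ≤ I(Δ;Q) = 0` because `(Δ,Q)` is independent of `S`.
Nonnegativity of `I(X;Y|Z)` is Gibbs' inequality for the joint law of `(X,Y,Z)` against
`P(x,z) P(y,z) / P(z)`, which has the same total mass.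
-/

open Finset Real

section Law

variable {Ω α β γ : Type} [Fintype Ω] {p : Ω → ℝ}

noncomputable def law (p : Ω → ℝ) (X : Ω → α) (x : α) : ℝ :=
  probEvent p (fun ω => X ω = x)

lemma law_nonneg (hp : ∀ ω, 0 ≤ p ω) (X : Ω → α) (x : α) : 0 ≤ law p X x :=
  sum_nonneg fun ω _ => by split_ifs <;> simp [hp ω]

lemma sum_law [Fintype α] (X : Ω → α) : ∑ x, law p X x = ∑ ω, p ω := by
  classical
  simp only [law, probEvent]
  rw [sum_comm]
  simp

lemma sum_law_pair [Fintype α] (X : Ω → α) (Y : Ω → β) (y : β) :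
    ∑ x, law p (fun ω => (X ω, Y ω)) (x, y) = law p Y y := by
  classical
  simp only [law, probEvent]
  rw [sum_comm]
  simp [Prod.ext_iff, ite_and]

lemma law_comp [Fintype α] [DecidableEq β] (X : Ω → α) (f : α → β) (y : β) :
    law p (fun ω => f (X ω)) y = ∑ x with f x = y, law p X x := by
  classical
  simp only [law, probEvent]
  rw [sum_comm]
  simp only [sum_ite_eq, mem_filter, mem_univ, true_and]
  congr!

lemma law_le_law_comp [Fintype α] (hp : ∀ ω, 0 ≤ p ω) (X : Ω → α) (f : α → β) (x : α) :
    law p X x ≤ law p (fun ω => f (X ω)) (f x) := by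
  classical
  rw [law_comp X f]
  exact single_le_sum (fun x' _ => law_nonneg hp X x') (by simp)

lemma entH_eq_law [Fintype α] (b : ℝ) (X : Ω → α) :
    entH b p X = -∑ x, law p X x * logb b (law p X x) := rfl

lemma entH_comp_eq_sum [Fintype α] [Fintype β] (b : ℝ) (X : Ω → α) (f : α → β) :
    entH b p (fun ω => f (X ω)) = -∑ x, law p X x * logb b (law p (fun ω => f (X ω)) (f x)) := by
  classical
  rw [entH_eq_law, ← sum_fiberwise univ f]
  congr 1
  refine sum_congr rfl fun y _ => ?_
  nth_rw 1 [law_comp X f y]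
  rw [sum_mul]
  exact sum_congr rfl fun x hx => by rw [(mem_filter.1 hx).2]

lemma entH_comp_of_injective [Fintype α] [Fintype β] (b : ℝ) (X : Ω → α) {f : α → β}
    (hf : Function.Injective f) : entH b p (fun ω => f (X ω)) = entH b p X := by
  classical
  have hlaw : ∀ x, law p (fun ω => f (X ω)) (f x) = law p X x := fun x => by
    simp [law_comp X f, hf.eq_iff, sum_filter]
  rw [entH_comp_eq_sum, entH_eq_law]
  simp only [hlaw]

end Law

lemma sum_mul_logb_sub_logb_nonneg {ι : Type} [Fintype ι] {b : ℝ} (hb : 1 < b) {P Q : ι → ℝ}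
    (hP : ∀ i, 0 ≤ P i) (hQ : ∀ i, 0 ≤ Q i) (hPQ : ∀ i, 0 < P i → 0 < Q i)
    (hsum : ∑ i, Q i ≤ ∑ i, P i) : 0 ≤ ∑ i, P i * (logb b (P i) - logb b (Q i)) := by
  have hterm : ∀ i, (P i - Q i) / log b ≤ P i * (logb b (P i) - logb b (Q i)) := by
    intro i
    rw [div_le_iff₀ (log_pos hb), logb, logb, ← sub_div, mul_div_assoc',
      div_mul_cancel₀ _ (log_pos hb).ne']
    rcases (hP i).eq_or_lt with h | h
    · simp [← h, hQ i]
    · have := one_sub_inv_le_log_of_pos (div_pos h (hPQ i h))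
      rw [log_div h.ne' (hPQ i h).ne', inv_div, ← mul_le_mul_iff_of_pos_left h,
        mul_one_sub, mul_div_cancel₀ _ h.ne'] at this
      exact this
  calc (0 : ℝ) ≤ (∑ i, P i - ∑ i, Q i) / log b := div_nonneg (by linarith) (log_pos hb).le
    _ = ∑ i, (P i - Q i) / log b := by rw [← sum_sub_distrib, sum_div]
    _ ≤ _ := sum_le_sum fun i _ => hterm i

section Information

variable {Ω α β γ : Type} [Fintype Ω] [Fintype α] [Fintype β] [Fintype γ] {p : Ω → ℝ} {b : ℝ}

lemma sum_law_mul_law_div_law (X : Ω → α) (Y : Ω → β) (Z : Ω → γ) :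
    ∑ w : α × β × γ, law p (fun ω => (X ω, Z ω)) (w.1, w.2.2) *
      law p (fun ω => (Y ω, Z ω)) w.2 / law p Z w.2.2 = ∑ ω, p ω := by
  calc _ = ∑ z, (∑ x, law p (fun ω => (X ω, Z ω)) (x, z)) *
        (∑ y, law p (fun ω => (Y ω, Z ω)) (y, z)) / law p Z z := by
        simp only [Fintype.sum_prod_type, sum_mul_sum, sum_div]
        exact (sum_congr rfl fun _ _ => sum_comm).trans sum_comm
    _ = ∑ z, law p Z z := by simp only [sum_law_pair, mul_self_div_self]
    _ = ∑ ω, p ω := sum_law Z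

theorem condMI_nonneg (hb : 1 < b) (hp : ∀ ω, 0 ≤ p ω) (X : Ω → α) (Y : Ω → β) (Z : Ω → γ) :
    0 ≤ condMI b p X Y Z := by
  set W : Ω → α × β × γ := fun ω => (X ω, Y ω, Z ω)
  set P := law p W
  set PXZ : α × β × γ → ℝ := fun w => law p (fun ω => (X ω, Z ω)) (w.1, w.2.2)
  set PYZ : α × β × γ → ℝ := fun w => law p (fun ω => (Y ω, Z ω)) w.2
  set PZ : α × β × γ → ℝ := fun w => law p Z w.2.2
  have hXYZ : entH b p (fun ω => (X ω, Y ω, Z ω)) = -∑ w, P w * logb b (P w) := rfl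
  have hXZ : entH b p (fun ω => (X ω, Z ω)) = -∑ w, P w * logb b (PXZ w) :=
    entH_comp_eq_sum b W (fun w => (w.1, w.2.2))
  have hYZ : entH b p (fun ω => (Y ω, Z ω)) = -∑ w, P w * logb b (PYZ w) :=
    entH_comp_eq_sum b W Prod.snd
  have hZ : entH b p Z = -∑ w, P w * logb b (PZ w) :=
    entH_comp_eq_sum b W (fun w => w.2.2)
  have hpos : ∀ w, 0 < P w → 0 < PXZ w ∧ 0 < PYZ w ∧ 0 < PZ w := fun w h =>
    ⟨h.trans_le (law_le_law_comp hp W (fun w => (w.1, w.2.2)) w),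
      h.trans_le (law_le_law_comp hp W Prod.snd w),
      h.trans_le (law_le_law_comp hp W (fun w => w.2.2) w)⟩
  have hterm : ∀ w, P w * (logb b (P w) - logb b (PXZ w * PYZ w / PZ w)) =
      P w * logb b (P w) - P w * logb b (PXZ w) - P w * logb b (PYZ w) +
        P w * logb b (PZ w) := by
    intro w
    by_cases h0 : P w = 0
    · rw [h0]; ring
    · obtain ⟨h1, h2, h3⟩ := hpos w ((law_nonneg hp W w).lt_of_ne' h0)
      rw [logb_div (mul_pos h1 h2).ne' h3.ne', logb_mul h1.ne' h2.ne']
      ring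
  have hcondMI : condMI b p X Y Z =
      ∑ w, P w * (logb b (P w) - logb b (PXZ w * PYZ w / PZ w)) := by
    simp only [hterm, sum_add_distrib, sum_sub_distrib, condMI, condH, hXYZ, hXZ, hYZ, hZ]
    ring
  rw [hcondMI]
  refine sum_mul_logb_sub_logb_nonneg hb (law_nonneg hp W) (fun w => ?_) (fun w h => ?_) ?_
  · exact div_nonneg (mul_nonneg (law_nonneg hp _ _) (law_nonneg hp _ _)) (law_nonneg hp _ _)
  · obtain ⟨h1, h2, h3⟩ := hpos w h
    positivity
  · rw [sum_law_mul_law_div_law, sum_law]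

theorem condH_nonneg (hb : 1 < b) (hp : ∀ ω, 0 ≤ p ω) (X : Ω → α) (Y : Ω → β) :
    0 ≤ condH b p X Y := by
  have hself : condH b p X (fun ω => (X ω, Y ω)) = 0 := by
    rw [condH, sub_eq_zero]
    exact entH_comp_of_injective b (fun ω => (X ω, Y ω)) (f := fun t => (t.1, t))
      fun _ _ h => congrArg Prod.snd h
  simpa [condMI, hself] using condMI_nonneg hb hp X X Y

lemma entH_const (hp : IsPMF p) : entH b p (fun _ => ()) = 0 := by
  have : law p (fun _ => ()) () = 1 := by rw [← hp.2, ← sum_law (fun _ : Ω => ())]; simp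
  simp [entH_eq_law, this]

theorem mutI_nonneg (hb : 1 < b) (hp : IsPMF p) (X : Ω → α) (Y : Ω → β) :
    0 ≤ mutI b p X Y := by
  have h := condMI_nonneg hb hp.1 X Y (fun _ => ())
  have hX : entH b p (fun ω => (X ω, ())) = entH b p X :=
    entH_comp_of_injective b X (f := fun x => (x, ())) fun _ _ h => congrArg Prod.fst h
  have hY : entH b p (fun ω => (Y ω, ())) = entH b p Y :=
    entH_comp_of_injective b Y (f := fun y => (y, ())) fun _ _ h => congrArg Prod.fst h
  have hXY : entH b p (fun ω => (X ω, Y ω, ())) = entH b p (fun ω => (X ω, Y ω)) :=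
    entH_comp_of_injective b (fun ω => (X ω, Y ω)) (f := fun t => (t.1, t.2, ()))
      fun _ _ h => by simpa [Prod.ext_iff] using h
  simp only [condMI, condH, hX, hY, hXY, entH_const hp] at h
  rw [mutI]
  linarith

end Information

/-- Lemma 2: if `I(Δ; Q) = 0`, `H(S' | S, Q) = 0`, and `I(Δ, Q; S) = 0`, then
`I(Δ; S' | S) = 0`: securely coded updates preserve the conditional independence
of the increment from the updated storage. -/
theorem secure_update_preserves_cond_independence
    {Ω α β γ δ : Type} [Fintype Ω] [Fintype α] [Fintype β] [Fintype γ] [Fintype δ]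
    (b : ℝ) (hb : 1 < b) (p : Ω → ℝ) (hp : IsPMF p)
    (Δ : Ω → α) (Q : Ω → β) (S : Ω → γ) (S' : Ω → δ)
    (hsec : mutI b p Δ Q = 0)
    (htrans : condH b p S' (fun ω => (S ω, Q ω)) = 0)
    (hind : mutI b p (fun ω => (Δ ω, Q ω)) S = 0) :
    condMI b p Δ S' S = 0 := by
  have hΔS' := condMI_nonneg hb hp.1 Δ S' S
  have hΔQ := condMI_nonneg hb hp.1 Δ Q (fun ω => (S' ω, S ω))
  have hS' := condH_nonneg hb hp.1 S' (fun ω => (Δ ω, S ω, Q ω))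
  have hΔS := mutI_nonneg hb hp Δ S
  have hQS := mutI_nonneg hb hp Q S
  have hQS'S : entH b p (fun ω => (Q ω, S' ω, S ω)) = entH b p (fun ω => (S' ω, S ω, Q ω)) :=
    entH_comp_of_injective b (fun ω => (S' ω, S ω, Q ω)) (f := fun t => (t.2.2, t.1, t.2.1))
      fun _ _ h => by simp_all [Prod.ext_iff]
  have hΔQS'S : entH b p (fun ω => (Δ ω, Q ω, S' ω, S ω)) =
      entH b p (fun ω => (S' ω, Δ ω, S ω, Q ω)) :=
    entH_comp_of_injective b (fun ω => (S' ω, Δ ω, S ω, Q ω))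
      (f := fun t => (t.2.1, t.2.2.2, t.1, t.2.2.1)) fun _ _ h => by simp_all [Prod.ext_iff]
  have hΔSQ : entH b p (fun ω => (Δ ω, S ω, Q ω)) = entH b p (fun ω => ((Δ ω, Q ω), S ω)) :=
    entH_comp_of_injective b (fun ω => ((Δ ω, Q ω), S ω)) (f := fun t => (t.1.1, t.2, t.1.2))
      fun _ _ h => by simp_all [Prod.ext_iff]
  have hSQ : entH b p (fun ω => (S ω, Q ω)) = entH b p (fun ω => (Q ω, S ω)) :=
    entH_comp_of_injective b (fun ω => (Q ω, S ω)) Prod.swap_injective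
  simp only [condMI, condH, mutI] at *
  linarith
end

section
/- Update threshold converse (numeric consequence): if (N-|D|)/(R_r - X - |D|) ≤ Σ_{n∈[N]\D} H(S_n)/L ≤ (N-|D|)/K_c with R_r - X - |D| > 0 and K_c > 0, then |D| ≤ R_r - K_c - X; moreover if |D|, R_r, X are integers and K_c is a real number, then |D| ≤ R_r - ⌈K_c⌉ - X. -/
theorem Int.le_sub_ceil_of_cast_le_sub {m n : ℤ} {K : ℝ} (h : (m : ℝ) ≤ n - K) :
    m ≤ n - ⌈K⌉ := by
  have : ⌈K⌉ ≤ n - m := Int.ceil_le.2 (by push_cast; linarith)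
  omega

theorem update_threshold_numeric_consequence_general
    {N : ℕ} (Rr X : ℕ) (D : Finset (Fin N)) (hDN : D.card < N)
    (Kc L : ℝ) (hKc : 0 < Kc)
    (HS : Fin N → ℝ)
    (hpos : (0 : ℝ) < (Rr : ℝ) - X - D.card)
    (h1 : ((N : ℝ) - D.card) / ((Rr : ℝ) - X - D.card)
        ≤ (∑ n ∈ Finset.univ \ D, HS n) / L)
    (h2 : (∑ n ∈ Finset.univ \ D, HS n) / L ≤ ((N : ℝ) - D.card) / Kc) :
    (D.card : ℝ) ≤ (Rr : ℝ) - Kc - X ∧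
    (D.card : ℤ) ≤ (Rr : ℤ) - ⌈Kc⌉ - X := by
  have hgap : (0 : ℝ) < N - D.card := sub_pos.2 (by exact_mod_cast hDN)
  have hKc_le : Kc ≤ Rr - X - D.card :=
    (div_le_div_iff_of_pos_left hgap hpos hKc).1 (h1.trans h2)
  have hreal : (D.card : ℝ) ≤ Rr - Kc - X := by linarith
  have hint : (D.card : ℤ) ≤ ((Rr : ℤ) - X) - ⌈Kc⌉ :=
    Int.le_sub_ceil_of_cast_le_sub (by push_cast; linarith)
  exact ⟨hreal, by linarith⟩

/-- Update threshold converse (numeric consequence): if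
`(N-|D|)/(R_r - X - |D|) ≤ (∑_{n∈[N]∖D} H(S_n))/L ≤ (N-|D|)/K_c` with
`R_r - X - |D| > 0` and `K_c > 0`, then `|D| ≤ R_r - K_c - X`; moreover, since
`|D|, R_r, X` are integers and `K_c` is real, `|D| ≤ R_r - ⌈K_c⌉ - X`. -/
theorem update_threshold_numeric_consequence
    {N : ℕ} (Rr X : ℕ) (D : Finset (Fin N)) (hDN : D.card < N)
    (Kc L : ℝ) (hKc : 0 < Kc) (hL : 0 < L)
    (HS : Fin N → ℝ) (hHS : ∀ n, 0 ≤ HS n)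
    (hpos : (0 : ℝ) < (Rr : ℝ) - X - D.card)
    (h1 : ((N : ℝ) - D.card) / ((Rr : ℝ) - X - D.card)
        ≤ (∑ n ∈ Finset.univ \ D, HS n) / L)
    (h2 : (∑ n ∈ Finset.univ \ D, HS n) / L ≤ ((N : ℝ) - D.card) / Kc) :
    (D.card : ℝ) ≤ (Rr : ℝ) - Kc - X ∧
    (D.card : ℤ) ≤ (Rr : ℤ) - ⌈Kc⌉ - X :=
  update_threshold_numeric_consequence_general Rr X D hDN Kc L hKc HS hpos h1 h2
end
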